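/- On the hexagonal lattice with L ≥ 8: if a cross-free configuration σ ∈ X satisfies H(σ) ≤ 2L, then σ is a regular configuration, i.e., σ ∈ R_n^{a,b} for some a, b ∈ Ω and some n ∈ {1, …, L−1}; in particular H(σ) = 2L. -/
import Mathlib


open scoped Classical BigOperators

namespace IsingHex

/-- Sites of the hexagonal lattice of side length `L` with periodic boundary conditions,
identified with the `2L²` triangular faces of the dual triangular lattice `Λ*`:
`(p, false)` is the up-triangle and `(p, true)` the down-triangle in the rhombic cell `p`. -/
abbrev Site (L : ℕ) : Type := (ZMod L × ZMod L) × Bool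

/-- Spin configurations `X = Ω^Λ` with spin set `Ω = Fin q`. -/
abbrev Conf (L q : ℕ) : Type := Site L → Fin q

/-- Adjacency of the hexagonal lattice: the up-triangle `(p, false)` is adjacent to the
down-triangles `(p, true)`, `(p - (1,0), true)` and `(p - (0,1), true)`. -/
def hexAdj {L : ℕ} (v w : Site L) : Prop :=
  (v.2 = false ∧ w.2 = true ∧
     (w.1 = v.1 ∨ w.1 = (v.1.1 - 1, v.1.2) ∨ w.1 = (v.1.1, v.1.2 - 1))) ∨
  (v.2 = true ∧ w.2 = false ∧
     (v.1 = w.1 ∨ v.1 = (w.1.1 - 1, w.1.2) ∨ v.1 = (w.1.1, w.1.2 - 1)))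

/-- The Hamiltonian `H(σ)`: the number of edges of `Λ` whose endpoints carry different
spins; each edge is counted exactly once through its unique up-triangle endpoint. -/
noncomputable def Ham (L q : ℕ) (σ : Conf L q) : ℕ :=
  Nat.card {e : Site L × Site L // e.1.2 = false ∧ hexAdj e.1 e.2 ∧ σ e.1 ≠ σ e.2}

/-- The monochromatic ground state `𝐚`. -/
def groundConf (L q : ℕ) (a : Fin q) : Conf L q := fun _ => a

/-- The set `S = {𝟏, …, 𝐪}` of ground states. -/
def groundSet (L q : ℕ) : Set (Conf L q) := {σ | ∃ a : Fin q, σ = groundConf L q a}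

/-- Partition function `Z_β`. -/
noncomputable def Zfun (L q : ℕ) (β : ℝ) : ℝ :=
  ∑' σ : Conf L q, Real.exp (-β * (Ham L q σ : ℝ))

/-- Gibbs measure of a set of configurations. -/
noncomputable def gibbsP (L q : ℕ) (β : ℝ) (A : Set (Conf L q)) : ℝ :=
  (∑' σ : Conf L q, A.indicator (fun ζ => Real.exp (-β * (Ham L q ζ : ℝ))) σ) / Zfun L q β

/-- `σ ∼ ζ`: the two configurations differ at exactly one site. -/
def oneFlip {L q : ℕ} (σ ζ : Conf L q) : Prop :=
  ∃ x : Site L, σ x ≠ ζ x ∧ ∀ y : Site L, y ≠ x → σ y = ζ y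

/-- Metropolis jump rates `c_β(σ, ζ)`. -/
noncomputable def rate (L q : ℕ) (β : ℝ) (σ ζ : Conf L q) : ℝ :=
  if oneFlip σ ζ then Real.exp (-β * max ((Ham L q ζ : ℝ) - (Ham L q σ : ℝ)) 0) else 0

/-- There is a `t`-path of single spin flips connecting `σ` and `ζ`. -/
def ConnBelow (L q : ℕ) (t : ℕ) (σ ζ : Conf L q) : Prop :=
  ∃ (N : ℕ) (ω : ℕ → Conf L q), ω 0 = σ ∧ ω N = ζ ∧
    (∀ n < N, oneFlip (ω n) (ω (n + 1))) ∧ ∀ n ≤ N, Ham L q (ω n) ≤ t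

/-- Communication height `Φ(σ, ζ)`. -/
noncomputable def commHeight (L q : ℕ) (σ ζ : Conf L q) : ℕ :=
  sInf {t : ℕ | ConnBelow L q t σ ζ}

/-- The strip of index `ℓ` in direction `d` (`0` = horizontal, `1` = vertical,
`2` = diagonal): `2L` consecutive triangles winding around the torus. -/
def stripSet (L : ℕ) (d : Fin 3) (ℓ : ZMod L) : Set (Site L) :=
  if d = 0 then {v | v.1.2 = ℓ}
  else if d = 1 then {v | v.1.1 = ℓ}
  else {v | (v.2 = false ∧ v.1.1 + v.1.2 = ℓ) ∨ (v.2 = true ∧ v.1.1 + v.1.2 = ℓ - 1)}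

/-- Strip energy `ΔH_s(σ)`: number of adjacent pairs inside the strip with different spins. -/
noncomputable def stripEnergy (L q : ℕ) (σ : Conf L q) (d : Fin 3) (ℓ : ZMod L) : ℕ :=
  Nat.card {e : Site L × Site L //
    e.1.2 = false ∧ e.1 ∈ stripSet L d ℓ ∧ e.2 ∈ stripSet L d ℓ ∧
      hexAdj e.1 e.2 ∧ σ e.1 ≠ σ e.2}

/-- The strip `(d, ℓ)` is an `a`-bridge of `σ`. -/
def IsBridgeWith (L q : ℕ) (σ : Conf L q) (d : Fin 3) (ℓ : ZMod L) (a : Fin q) : Prop :=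
  ∀ v ∈ stripSet L d ℓ, σ v = a

/-- The strip `(d, ℓ)` is a bridge of `σ`. -/
def IsBridge (L q : ℕ) (σ : Conf L q) (d : Fin 3) (ℓ : ZMod L) : Prop :=
  ∃ a : Fin q, IsBridgeWith L q σ d ℓ a

/-- Cyclic enumeration of the strip `(d, ℓ)` by `ZMod (2L)`, consecutive triangles
being adjacent. -/
def stripCycle (L : ℕ) (d : Fin 3) (ℓ : ZMod L) (k : ZMod (2 * L)) : Site L :=
  let t : ZMod L := ((k.val / 2 : ℕ) : ZMod L)
  if d = 0 then ((t, ℓ), decide (k.val % 2 = 1))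
  else if d = 1 then ((ℓ, t), decide (k.val % 2 = 1))
  else if k.val % 2 = 1 then ((t, ℓ - 1 - t), true) else ((t, ℓ - t), false)

/-- A set of triangles is an arc (a set of consecutive triangles) of the strip `(d, ℓ)`. -/
def IsArc (L : ℕ) (d : Fin 3) (ℓ : ZMod L) (S : Set (Site L)) : Prop :=
  ∃ (s : ZMod (2 * L)) (m : ℕ),
    S = (fun k : ℕ => stripCycle L d ℓ (s + (k : ZMod (2 * L)))) '' Set.Iio m

/-- The strip `(d, ℓ)` is an `{a,b}`-semibridge of `σ`: it carries exactly the two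
spins `a ≠ b`, and the sites carrying each spin are consecutive in the strip. -/
def IsSemibridgePair (L q : ℕ) (σ : Conf L q) (d : Fin 3) (ℓ : ZMod L) (a b : Fin q) : Prop :=
  a ≠ b ∧ (∀ v ∈ stripSet L d ℓ, σ v = a ∨ σ v = b) ∧
    (∃ v ∈ stripSet L d ℓ, σ v = a) ∧ (∃ v ∈ stripSet L d ℓ, σ v = b) ∧
    IsArc L d ℓ {v ∈ stripSet L d ℓ | σ v = a} ∧ IsArc L d ℓ {v ∈ stripSet L d ℓ | σ v = b}

/-- The strip `(d, ℓ)` is a semibridge of `σ`. -/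
def IsSemibridge (L q : ℕ) (σ : Conf L q) (d : Fin 3) (ℓ : ZMod L) : Prop :=
  ∃ a b : Fin q, IsSemibridgePair L q σ d ℓ a b

/-- `σ` has an `a`-cross: two `a`-bridges in different directions. -/
def HasCross (L q : ℕ) (σ : Conf L q) (a : Fin q) : Prop :=
  ∃ (d d' : Fin 3) (ℓ ℓ' : ZMod L),
    d ≠ d' ∧ IsBridgeWith L q σ d ℓ a ∧ IsBridgeWith L q σ d' ℓ' a

/-- `σ` is cross-free. -/
def CrossFree (L q : ℕ) (σ : Conf L q) : Prop := ∀ a : Fin q, ¬ HasCross L q σ a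

/-- Connected subsets of the torus `𝕋_L` of strip indices (the collection `𝔖_L`). -/
def CircConn (L : ℕ) (P : Set (ZMod L)) : Prop :=
  ∀ x ∈ P, ∀ y ∈ P, ∃ (N : ℕ) (γ : ℕ → ZMod L), γ 0 = x ∧ γ N = y ∧
    (∀ n ≤ N, γ n ∈ P) ∧ ∀ n < N, γ (n + 1) = γ n + 1 ∨ γ (n + 1) = γ n - 1

/-- Union of the strips with indices in `P`, in direction `d`. -/
def stripUnion (L : ℕ) (d : Fin 3) (P : Set (ZMod L)) : Set (Site L) :=
  ⋃ ℓ ∈ P, stripSet L d ℓ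

/-- The configuration `ξ^{a,b}_U`: spin `b` on `U` and spin `a` elsewhere. -/
noncomputable def xiConf (L q : ℕ) (a b : Fin q) (U : Set (Site L)) : Conf L q :=
  fun v => if v ∈ U then b else a

/-- `σ ∈ R_n^{a,b}`: a regular configuration between `𝐚` and `𝐛` built from `n` strips. -/
def IsRegular (L q : ℕ) (σ : Conf L q) (a b : Fin q) (n : ℕ) : Prop :=
  ∃ (d : Fin 3) (P : Set (ZMod L)), CircConn L P ∧ P.ncard = n ∧
    σ = xiConf L q a b (stripUnion L d P)

/-- The vertices (in the triangular lattice) of the triangle `v`. -/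
def triVerts (L : ℕ) (v : Site L) : Set (ZMod L × ZMod L) :=
  if v.2 = false then {v.1, (v.1.1 + 1, v.1.2), (v.1.1, v.1.2 + 1)}
  else {(v.1.1 + 1, v.1.2), (v.1.1, v.1.2 + 1), (v.1.1 + 1, v.1.2 + 1)}

/-- A connected set of triangles (connected through shared sides). -/
def ConnSet (L : ℕ) (U : Set (Site L)) : Prop :=
  ∀ x ∈ U, ∀ y ∈ U, ∃ (N : ℕ) (γ : ℕ → Site L), γ 0 = x ∧ γ N = y ∧
    (∀ n ≤ N, γ n ∈ U) ∧ ∀ n < N, hexAdj (γ n) (γ (n + 1))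

/-- A one-dimensional canonical set inside the strip `(d, ℓ)`. -/
def OneDimCanonical (L : ℕ) (d : Fin 3) (ℓ : ZMod L) (U : Set (Site L)) : Prop :=
  U ⊆ stripSet L d ℓ ∧ U.Nonempty ∧ U ≠ stripSet L d ℓ ∧
  (ConnSet L U ∨
    (Even U.ncard ∧ ∃ (U₁ : Set (Site L)) (y : Site L),
      U = U₁ ∪ {y} ∧ y ∉ U₁ ∧ U₁.Nonempty ∧ ConnSet L U₁ ∧
      (∀ x ∈ U₁, ¬ hexAdj x y) ∧ ∃ x ∈ U₁, (triVerts L x ∩ triVerts L y).Nonempty))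

/-- `P ≺ P'`: connected index sets with `P ⊆ P'` and `|P'| = |P| + 1`. -/
def StepPair (L : ℕ) (P P' : Set (ZMod L)) : Prop :=
  CircConn L P ∧ CircConn L P' ∧ P ⊆ P' ∧ P'.ncard = P.ncard + 1

/-- A protuberance attached to `s(P)` inside the strip `(d, ℓ)`: a one-dimensional
canonical set such that, when `1 ≤ |P| ≤ L-2`, at least half of its triangles share a
side with `s(P)`. -/
def IsProtuberance (L : ℕ) (d : Fin 3) (P : Set (ZMod L)) (ℓ : ZMod L)
    (U : Set (Site L)) : Prop :=
  OneDimCanonical L d ℓ U ∧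
    (1 ≤ P.ncard → P.ncard ≤ L - 2 →
      U.ncard ≤ 2 * {x ∈ U | ∃ y ∈ stripUnion L d P, hexAdj x y}.ncard)

/-- `‖σ‖_a`: the number of sites with spin `a`. -/
noncomputable def spinCount (L q : ℕ) (σ : Conf L q) (a : Fin q) : ℕ :=
  Nat.card {x : Site L // σ x = a}

/-- `N̂(S)`: configurations connected to a ground state by a `(2L+2)`-path. -/
def NHatGround (L q : ℕ) : Set (Conf L q) :=
  {ζ | ∃ a : Fin q, ConnBelow L q (2 * L + 2) (groundConf L q a) ζ}

/-- A nice pair of configurations (relative to the partition class `A`). -/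
def NicePair (L q : ℕ) (A : Finset (Fin q)) (σ ζ : Conf L q) : Prop :=
  σ ∉ NHatGround L q ∧ ζ ∉ NHatGround L q ∧ oneFlip σ ζ ∧
    (∑ a ∈ A, spinCount L q σ a) = L ^ 2 ∧ (∑ a ∈ A, spinCount L q ζ a) = L ^ 2 - 1

/-- `u` is the vector of mean hitting times `σ ↦ E_σ[τ_A]` of the Metropolis dynamics:
it vanishes on `A` and satisfies the first-step (harmonicity) equations off `A`. -/
def IsMeanHittingTime (L q : ℕ) (β : ℝ) (A : Set (Conf L q)) (u : Conf L q → ℝ) : Prop :=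
  (∀ σ ∈ A, u σ = 0) ∧
    ∀ σ ∉ A, (∑' ζ : Conf L q, rate L q β σ ζ) * u σ =
      1 + ∑' ζ : Conf L q, rate L q β σ ζ * u ζ

/-- Gibbs weight `μ_β(σ)`. -/
noncomputable def gibbsWeight (L q : ℕ) (β : ℝ) (σ : Conf L q) : ℝ :=
  Real.exp (-β * (Ham L q σ : ℝ)) / Zfun L q β

/-- The Dirichlet form `D_β(f)`. -/
noncomputable def dirichletForm (L q : ℕ) (β : ℝ) (f : Conf L q → ℝ) : ℝ :=
  (1 / 2) * ∑' p : Conf L q × Conf L q,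
    gibbsWeight L q β p.1 * rate L q β p.1 p.2 * (f p.2 - f p.1) ^ 2

/-- `h` is the equilibrium potential `h^β_{A,B}(σ) = P_σ[τ_A < τ_B]`: it equals `1` on
`A`, `0` on `B`, and is harmonic for the Metropolis dynamics off `A ∪ B`. -/
def IsEqPotential (L q : ℕ) (β : ℝ) (A B : Set (Conf L q)) (h : Conf L q → ℝ) : Prop :=
  (∀ σ ∈ A, h σ = 1) ∧ (∀ σ ∈ B, h σ = 0) ∧
    ∀ σ, σ ∉ A → σ ∉ B → (∑' ζ : Conf L q, rate L q β σ ζ * (h σ - h ζ)) = 0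

section Aux

variable (L q : ℕ)

/-- Defect edges of `σ` as a finset. -/
noncomputable def Efin [NeZero L] (σ : Conf L q) : Finset (Site L × Site L) :=
  Finset.univ.filter fun e => e.1.2 = false ∧ hexAdj e.1 e.2 ∧ σ e.1 ≠ σ e.2

lemma ham_eq [NeZero L] (σ : Conf L q) : Ham L q σ = (Efin L q σ).card := by
  rw [Ham, Nat.card_eq_fintype_card, Efin]
  convert Fintype.card_subtype _ using 2

/-- Defect edges inside the strip `(d, ℓ)` as a finset. -/
noncomputable def ESfin [NeZero L] (σ : Conf L q) (d : Fin 3) (ℓ : ZMod L) :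
    Finset (Site L × Site L) :=
  Finset.univ.filter fun e =>
    e.1.2 = false ∧ e.1 ∈ stripSet L d ℓ ∧ e.2 ∈ stripSet L d ℓ ∧
      hexAdj e.1 e.2 ∧ σ e.1 ≠ σ e.2

lemma stripEnergy_eq [NeZero L] (σ : Conf L q) (d : Fin 3) (ℓ : ZMod L) :
    stripEnergy L q σ d ℓ = (ESfin L q σ d ℓ).card := by
  rw [stripEnergy, Nat.card_eq_fintype_card, ESfin]
  convert Fintype.card_subtype _ using 2

lemma hexAdj_symm {L : ℕ} {v w : Site L} (h : hexAdj v w) : hexAdj w v := by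
  unfold hexAdj at *; tauto

/-- The index of the (unique) strip in direction `d` containing `v`. -/
def idx {L : ℕ} (d : Fin 3) (v : Site L) : ZMod L :=
  match d with
  | ⟨0, _⟩ => v.1.2
  | ⟨1, _⟩ => v.1.1
  | ⟨2, _⟩ => v.1.1 + v.1.2 + (if v.2 then 1 else 0)

lemma mem_strip_iff {L : ℕ} {d : Fin 3} {ℓ : ZMod L} {v : Site L} :
    v ∈ stripSet L d ℓ ↔ idx d v = ℓ := by
  rcases v with ⟨⟨x, y⟩, b⟩
  fin_cases d
  · simp [stripSet, idx]
  · simp [stripSet, idx]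
  · cases b
    · simp [stripSet, idx]
    · simp [stripSet, idx, eq_sub_iff_add_eq]

end Aux

section Cyc

variable (L : ℕ)

/-- Enumeration of the strip `(d, ℓ)` by naturals, `2L`-periodic. -/
def cyc (d : Fin 3) (ℓ : ZMod L) (k : ℕ) : Site L :=
  let t : ZMod L := ((k / 2 : ℕ) : ZMod L)
  let o : Bool := decide (k % 2 = 1)
  match d with
  | ⟨0, _⟩ => ((t, ℓ), o)
  | ⟨1, _⟩ => ((ℓ, t), o)
  | ⟨2, _⟩ => ((t, ℓ - t - (if o then 1 else 0)), o)

lemma cyc_bool (d : Fin 3) (ℓ : ZMod L) (k : ℕ) :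
    (cyc L d ℓ k).2 = decide (k % 2 = 1) := by
  fin_cases d <;> rfl

lemma cyc_mem (d : Fin 3) (ℓ : ZMod L) (k : ℕ) : cyc L d ℓ k ∈ stripSet L d ℓ := by
  rw [mem_strip_iff]
  by_cases h : k % 2 = 1 <;> fin_cases d <;> simp [cyc, idx, h] <;> ring

lemma cyc_adj (d : Fin 3) (ℓ : ZMod L) (k : ℕ) :
    hexAdj (cyc L d ℓ k) (cyc L d ℓ (k + 1)) := by
  rcases Nat.even_or_odd k with ⟨t, ht⟩ | ⟨t, ht⟩
  · have h1 : ¬ (k % 2 = 1) := by omega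
    have h2 : (k + 1) % 2 = 1 := by omega
    have h3 : (k + 1) / 2 = k / 2 := by omega
    fin_cases d <;> refine Or.inl ⟨by simp [cyc, h1], by simp [cyc, h2], ?_⟩ <;>
      simp [cyc, h1, h2, h3]
  · have h1 : k % 2 = 1 := by omega
    have h2 : ¬ ((k + 1) % 2 = 1) := by omega
    have h3 : (k + 1) / 2 = k / 2 + 1 := by omega
    have hc : (((k + 1) / 2 : ℕ) : ZMod L) = ((k / 2 : ℕ) : ZMod L) + 1 := by
      rw [h3]; push_cast; ring
    fin_cases d <;> refine Or.inr ⟨by simp [cyc, h1], by simp [cyc, h2], ?_⟩ <;>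
      simp [cyc, h1, h2, hc, sub_sub] <;> tauto

lemma cyc_per (d : Fin 3) (ℓ : ZMod L) (k : ℕ) : cyc L d ℓ (k + 2 * L) = cyc L d ℓ k := by
  have h1 : (k + 2 * L) % 2 = k % 2 := by omega
  have h2 : (k + 2 * L) / 2 = k / 2 + L := by omega
  have h3 : ((k / 2 + L : ℕ) : ZMod L) = ((k / 2 : ℕ) : ZMod L) := by push_cast; simp
  fin_cases d <;> simp [cyc, h1, h2, h3]

lemma natCast_zmod_inj [NeZero L] {a b : ℕ} (ha : a < L) (hb : b < L)
    (h : (a : ZMod L) = (b : ZMod L)) : a = b := by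
  have := congrArg ZMod.val h
  rwa [ZMod.val_cast_of_lt ha, ZMod.val_cast_of_lt hb] at this

lemma cyc_inj [NeZero L] (d : Fin 3) (ℓ : ZMod L) {k1 k2 : ℕ}
    (h1 : k1 < 2 * L) (h2 : k2 < 2 * L) (h : cyc L d ℓ k1 = cyc L d ℓ k2) : k1 = k2 := by
  have hb := congrArg Prod.snd h
  rw [cyc_bool, cyc_bool] at hb
  have hpar : k1 % 2 = k2 % 2 := by
    by_cases hp : k1 % 2 = 1 <;> by_cases hq : k2 % 2 = 1 <;>
      simp [hp, hq] at hb ⊢ <;> omega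
  have ht : ((k1 / 2 : ℕ) : ZMod L) = ((k2 / 2 : ℕ) : ZMod L) := by
    have hf := congrArg (fun v : Site L => v.1.1) h
    have hs := congrArg (fun v : Site L => v.1.2) h
    fin_cases d <;> simp [cyc] at hf hs <;> assumption
  have := natCast_zmod_inj L (by omega : k1 / 2 < L) (by omega : k2 / 2 < L) ht
  omega

lemma cyc_surj [NeZero L] (d : Fin 3) (ℓ : ZMod L) {v : Site L} (hv : v ∈ stripSet L d ℓ) :
    ∃ k < 2 * L, cyc L d ℓ k = v := by
  rcases v with ⟨⟨x, y⟩, b⟩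
  rw [mem_strip_iff] at hv
  have hx : x.val < L := ZMod.val_lt x
  have hy : y.val < L := ZMod.val_lt y
  have hcx : ((x.val : ℕ) : ZMod L) = x := by simp [ZMod.natCast_val, ZMod.cast_id]
  have hcy : ((y.val : ℕ) : ZMod L) = y := by simp [ZMod.natCast_val, ZMod.cast_id]
  have e1 : ∀ n : ℕ, (2 * n) / 2 = n := fun n => by omega
  have e2 : ∀ n : ℕ, (2 * n) % 2 = 0 := fun n => by omega
  have e3 : ∀ n : ℕ, (2 * n + 1) / 2 = n := fun n => by omega
  have e4 : ∀ n : ℕ, (2 * n + 1) % 2 = 1 := fun n => by omega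
  cases b
  · fin_cases d <;> simp [idx] at hv
    · exact ⟨2 * x.val, by omega, by simp [cyc, e1, e2, hcx, ← hv]⟩
    · exact ⟨2 * y.val, by omega, by simp [cyc, e1, e2, hcy, ← hv]⟩
    · refine ⟨2 * x.val, by omega, by simp [cyc, e1, e2, hcx]; rw [← hv]; ring⟩
  · fin_cases d <;> simp [idx] at hv
    · exact ⟨2 * x.val + 1, by omega, by simp [cyc, e3, e4, hcx, ← hv]⟩
    · exact ⟨2 * y.val + 1, by omega, by simp [cyc, e3, e4, hcy, ← hv]⟩
    · refine ⟨2 * x.val + 1, by omega, by simp [cyc, e3, e4, hcx]; rw [← hv]; ring⟩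

end Cyc
section Changes

variable {α : Type*} {n : ℕ} {g : ℕ → α}

lemma gper_mul (hper : ∀ k, g (k + n) = g k) : ∀ (t a : ℕ), g (a + n * t) = g a := by
  intro t
  induction t with
  | zero => simp
  | succ t ih =>
    intro a
    have h : a + n * (t + 1) = (a + n * t) + n := by ring
    rw [h, hper, ih]

lemma gmod (hn : 0 < n) (hper : ∀ k, g (k + n) = g k) (m : ℕ) : g m = g (m % n) := by
  conv_lhs => rw [show m = m % n + n * (m / n) by rw [Nat.mod_add_div]]
  exact gper_mul hper _ _

lemma g_succ_mod (hn : 0 < n) (hper : ∀ k, g (k + n) = g k) (m : ℕ) :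
    g (m + 1) = g (m % n + 1) := by
  conv_lhs => rw [show m + 1 = (m % n + 1) + n * (m / n) by
    have := Nat.mod_add_div m n; omega]
  exact gper_mul hper _ _

/-- If there are no changes along the cycle starting from `s`, the function is constant. -/
lemma no_change_const (hn : 0 < n) (hper : ∀ k, g (k + n) = g k)
    {C : Finset ℕ} (hC : ∀ m, g m ≠ g (m + 1) → m % n ∈ C)
    (s : ℕ) : ∀ j, (∀ i < j, (s + i) % n ∉ C) → g (s + j) = g s := by
  intro j
  induction j with
  | zero => intro _; rfl
  | succ j ih =>
    intro hstep
    have h1 : g (s + j) = g s := ih fun i hi => hstep i (by omega)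
    have h2 : g (s + j) = g (s + j + 1) := by
      by_contra hne
      exact hstep j (by omega) (hC _ hne)
    exact h2.symm.trans h1

/-- A nonconstant `n`-periodic function on `ℕ` has at least two changes in `[0, n)`. -/
lemma two_changes (hn : 2 ≤ n) (hper : ∀ k, g (k + n) = g k)
    {j1 j2 : ℕ} (hne : g j1 ≠ g j2) :
    ∃ k1 k2, k1 < n ∧ k2 < n ∧ k1 ≠ k2 ∧ g k1 ≠ g (k1 + 1) ∧ g k2 ≠ g (k2 + 1) := by
  have hn0 : 0 < n := by omega
  set C : Finset ℕ := (Finset.range n).filter (fun k => g k ≠ g (k + 1)) with hCdef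
  have hC : ∀ m, g m ≠ g (m + 1) → m % n ∈ C := by
    intro m hm
    rw [hCdef, Finset.mem_filter, Finset.mem_range]
    refine ⟨Nat.mod_lt _ hn0, ?_⟩
    rw [← gmod hn0 hper, ← g_succ_mod hn0 hper]
    exact hm
  have hcard : 2 ≤ C.card := by
    by_contra hlt
    have h01 : C.card = 0 ∨ C.card = 1 := by omega
    rcases h01 with h | h
    · -- C empty : g constant
      have hCe : C = ∅ := Finset.card_eq_zero.mp h
      have hconst : ∀ j, g j = g 0 := by
        intro j
        have := no_change_const hn0 hper hC 0 j (fun i _ => by simp [hCe])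
        simpa using this
      exact hne ((hconst j1).trans (hconst j2).symm)
    · -- C = {k0}
      obtain ⟨k0, hk0⟩ := Finset.card_eq_one.mp h
      have hk0C : k0 ∈ C := by simp [hk0]
      have hk0lt : k0 < n := by
        rw [hCdef, Finset.mem_filter, Finset.mem_range] at hk0C
        exact hk0C.1
      have key : g (k0 + 1 + (n - 1)) = g (k0 + 1) := by
        apply no_change_const hn0 hper hC
        intro i hi
        rw [hk0, Finset.mem_singleton]
        intro hmod
        have h2 : (k0 + 1 + i) % n = k0 % n := by rw [hmod, Nat.mod_eq_of_lt hk0lt]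
        have h3 : (k0 + 1 + i - k0) % n = 0 := Nat.sub_mod_eq_zero_of_mod_eq h2
        have h4 : (1 + i) % n = 0 := by rw [show k0 + 1 + i - k0 = 1 + i by omega] at h3; exact h3
        have h5 := Nat.le_of_dvd (by omega) (Nat.dvd_of_mod_eq_zero h4)
        omega
      have hfin : g (k0 + 1 + (n - 1)) = g k0 := by
        rw [show k0 + 1 + (n - 1) = k0 + n by omega, hper]
      rw [hfin] at key
      rw [hCdef, Finset.mem_filter] at hk0C
      exact hk0C.2 key
  obtain ⟨a, ha, b, hb, hab⟩ := Finset.one_lt_card.mp (by omega : 1 < C.card)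
  rw [hCdef, Finset.mem_filter, Finset.mem_range] at ha hb
  exact ⟨a, b, ha.1, hb.1, hab, ha.2, hb.2⟩

end Changes
section StripBounds

variable (L q : ℕ)

/-- Oriented defect edge of the strip cycle at a change position. -/
def cycEdge (d : Fin 3) (ℓ : ZMod L) (k : ℕ) : Site L × Site L :=
  if k % 2 = 1 then (cyc L d ℓ (k + 1), cyc L d ℓ k) else (cyc L d ℓ k, cyc L d ℓ (k + 1))

lemma cycEdge_mem [NeZero L] (σ : Conf L q) (d : Fin 3) (ℓ : ZMod L) (k : ℕ)
    (hch : σ (cyc L d ℓ k) ≠ σ (cyc L d ℓ (k + 1))) :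
    cycEdge L d ℓ k ∈ ESfin L q σ d ℓ := by
  rw [ESfin, Finset.mem_filter]
  refine ⟨Finset.mem_univ _, ?_⟩
  by_cases h : k % 2 = 1 <;>
    simp only [cycEdge, h, if_true, if_false, reduceIte]
  · refine ⟨?_, cyc_mem L d ℓ _, cyc_mem L d ℓ _, hexAdj_symm (cyc_adj L d ℓ k), hch.symm⟩
    rw [cyc_bool]
    simp [Nat.succ_mod_two_eq_one_iff, h]
  · refine ⟨?_, cyc_mem L d ℓ _, cyc_mem L d ℓ _, cyc_adj L d ℓ k, hch⟩
    rw [cyc_bool]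
    simp [h]

lemma cycEdge_inj [NeZero L] (hL : 8 ≤ L) (d : Fin 3) (ℓ : ZMod L) {k1 k2 : ℕ}
    (h1 : k1 < 2 * L) (h2 : k2 < 2 * L) (h : cycEdge L d ℓ k1 = cycEdge L d ℓ k2) :
    k1 = k2 := by
  have cyc_top : cyc L d ℓ (2 * L) = cyc L d ℓ 0 := by
    have := cyc_per L d ℓ 0
    simpa using this
  have inj := fun {a b : ℕ} (ha : a < 2 * L) (hb : b < 2 * L) => cyc_inj L d ℓ ha hb
  by_cases p1 : k1 % 2 = 1 <;> by_cases p2 : k2 % 2 = 1 <;>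
    simp only [cycEdge, p1, p2, if_true, if_false, reduceIte, Prod.mk.injEq] at h
  · exact inj h1 h2 h.2
  · -- k1 odd, k2 even : fst: cyc (k1+1) = cyc k2 ; snd: cyc k1 = cyc (k2+1)
    exfalso
    by_cases hk2 : k2 + 1 < 2 * L
    · have e1 : k1 = k2 + 1 := inj h1 hk2 h.2
      have e2 : k1 + 1 = k2 := by
        by_cases hk1 : k1 + 1 < 2 * L
        · exact inj hk1 h2 h.1
        · have : k1 + 1 = 2 * L := by omega
          rw [this, cyc_top] at h
          have := inj (by omega : (0:ℕ) < 2 * L) h2 h.1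
          omega
      omega
    · have : k2 + 1 = 2 * L := by omega
      rw [this, cyc_top] at h
      have e1 : k1 = 0 := inj h1 (by omega) h.2
      omega
  · exfalso
    by_cases hk1 : k1 + 1 < 2 * L
    · have e1 : k1 + 1 = k2 := inj hk1 h2 h.2
      have e2 : k1 = k2 + 1 := by
        by_cases hk2 : k2 + 1 < 2 * L
        · exact inj h1 hk2 h.1
        · have : k2 + 1 = 2 * L := by omega
          rw [this, cyc_top] at h
          have := inj h1 (by omega : (0:ℕ) < 2 * L) h.1
          omega
      omega
    · have : k1 + 1 = 2 * L := by omega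
      rw [this, cyc_top] at h
      have e1 : k2 = 0 := (inj (by omega) h2 h.2).symm
      omega
  · exact inj h1 h2 h.1

/-- A strip that is not monochromatic has energy at least 2. -/
lemma stripEnergy_ge_two [NeZero L] (hL : 8 ≤ L) (σ : Conf L q) (d : Fin 3) (ℓ : ZMod L)
    {v w : Site L} (hv : v ∈ stripSet L d ℓ) (hw : w ∈ stripSet L d ℓ)
    (hvw : σ v ≠ σ w) : 2 ≤ stripEnergy L q σ d ℓ := by
  rw [stripEnergy_eq]
  obtain ⟨j1, hj1, hcv⟩ := cyc_surj L d ℓ hv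
  obtain ⟨j2, hj2, hcw⟩ := cyc_surj L d ℓ hw
  have hne : (σ ∘ cyc L d ℓ) j1 ≠ (σ ∘ cyc L d ℓ) j2 := by
    simp [hcv, hcw, hvw]
  obtain ⟨k1, k2, hk1, hk2, hkne, hc1, hc2⟩ :=
    two_changes (by omega : 2 ≤ 2 * L) (fun k => by simp [cyc_per]) hne
  rw [show (2 : ℕ) = ({cycEdge L d ℓ k1, cycEdge L d ℓ k2} : Finset _).card from ?_]
  · apply Finset.card_le_card
    intro e he
    rcases Finset.mem_insert.mp he with rfl | he
    · exact cycEdge_mem L q σ d ℓ k1 hc1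
    · rw [Finset.mem_singleton] at he
      subst he
      exact cycEdge_mem L q σ d ℓ k2 hc2
  · rw [Finset.card_insert_of_notMem, Finset.card_singleton]
    rw [Finset.mem_singleton]
    intro h
    exact hkne (cycEdge_inj L hL d ℓ hk1 hk2 h)

/-- A strip with zero energy is monochromatic. -/
lemma stripEnergy_zero_const [NeZero L] (hL : 8 ≤ L) (σ : Conf L q) (d : Fin 3) (ℓ : ZMod L)
    (h0 : stripEnergy L q σ d ℓ = 0) :
    ∀ v ∈ stripSet L d ℓ, ∀ w ∈ stripSet L d ℓ, σ v = σ w := by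
  intro v hv w hw
  by_contra hne
  have := stripEnergy_ge_two L q hL σ d ℓ hv hw hne
  omega

end StripBounds
section DoubleCount

variable (L q : ℕ)

lemma ESfin_eq_filter [NeZero L] (σ : Conf L q) (d : Fin 3) (ℓ : ZMod L) :
    ESfin L q σ d ℓ =
      (Efin L q σ).filter (fun e => e.1 ∈ stripSet L d ℓ ∧ e.2 ∈ stripSet L d ℓ) := by
  ext e
  simp only [ESfin, Efin, Finset.mem_filter, Finset.mem_univ, true_and]
  tauto

/-- Each defect edge lies in the strips of at most two directions. -/
lemma edge_strip_count [NeZero L] (hL : 8 ≤ L) (σ : Conf L q) {e : Site L × Site L}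
    (he : e ∈ Efin L q σ) :
    (Finset.univ.filter
      (fun p : Fin 3 × ZMod L => e.1 ∈ stripSet L p.1 p.2 ∧ e.2 ∈ stripSet L p.1 p.2)).card
      ≤ 2 := by
  haveI : Fact (1 < L) := ⟨by omega⟩
  have hone : (1 : ZMod L) ≠ 0 := one_ne_zero
  rw [Efin, Finset.mem_filter] at he
  obtain ⟨-, hup, hadj, -⟩ := he
  rcases e with ⟨v, w⟩
  rcases v with ⟨⟨x, y⟩, bv⟩
  simp only at hup
  subst hup
  rcases hadj with ⟨-, hw2, hw1⟩ | ⟨hv2, -, -⟩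
  swap
  · simp at hv2
  rcases hw1 with h | h | h
  · -- w = ((x, y), true) : strips (0, y), (1, x)
    have hww : w = (((x, y) : ZMod L × ZMod L), true) := Prod.ext h hw2
    subst hww
    refine le_trans (Finset.card_le_card (?_ :
        _ ⊆ ({(0, y), (1, x)} : Finset (Fin 3 × ZMod L))))
      (le_trans (Finset.card_insert_le _ _) (by simp))
    intro p hp
    rcases p with ⟨d, ℓ⟩
    rw [Finset.mem_filter, mem_strip_iff, mem_strip_iff] at hp
    obtain ⟨-, hp1, hp2⟩ := hp
    simp only [Finset.mem_insert, Finset.mem_singleton, Prod.mk.injEq]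
    fin_cases d <;> simp [idx] at hp1 hp2
    · exact Or.inl ⟨rfl, hp1.symm⟩
    · exact Or.inr ⟨rfl, hp1.symm⟩
    · exfalso
      apply hone
      rw [← hp1] at hp2
      linear_combination hp2
  · -- w = ((x - 1, y), true) : strips (0, y), (2, x + y)
    have hww : w = (((x - 1, y) : ZMod L × ZMod L), true) := Prod.ext h hw2
    subst hww
    refine le_trans (Finset.card_le_card (?_ :
        _ ⊆ ({(0, y), (2, x + y)} : Finset (Fin 3 × ZMod L))))
      (le_trans (Finset.card_insert_le _ _) (by simp))
    intro p hp
    rcases p with ⟨d, ℓ⟩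
    rw [Finset.mem_filter, mem_strip_iff, mem_strip_iff] at hp
    obtain ⟨-, hp1, hp2⟩ := hp
    simp only [Finset.mem_insert, Finset.mem_singleton, Prod.mk.injEq]
    fin_cases d <;> simp [idx] at hp1 hp2
    · exact Or.inl ⟨rfl, hp1.symm⟩
    · exfalso
      apply hone
      rw [← hp1] at hp2
      linear_combination -hp2
    · exact Or.inr ⟨rfl, hp1.symm⟩
  · -- w = ((x, y - 1), true) : strips (1, x), (2, x + y)
    have hww : w = (((x, y - 1) : ZMod L × ZMod L), true) := Prod.ext h hw2
    subst hww
    refine le_trans (Finset.card_le_card (?_ :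
        _ ⊆ ({(1, x), (2, x + y)} : Finset (Fin 3 × ZMod L))))
      (le_trans (Finset.card_insert_le _ _) (by simp))
    intro p hp
    rcases p with ⟨d, ℓ⟩
    rw [Finset.mem_filter, mem_strip_iff, mem_strip_iff] at hp
    obtain ⟨-, hp1, hp2⟩ := hp
    simp only [Finset.mem_insert, Finset.mem_singleton, Prod.mk.injEq]
    fin_cases d <;> simp [idx] at hp1 hp2
    · exfalso
      apply hone
      rw [← hp1] at hp2
      linear_combination -hp2
    · exact Or.inl ⟨rfl, hp1.symm⟩
    · exact Or.inr ⟨rfl, hp1.symm⟩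

lemma sum_stripEnergy_le [NeZero L] (hL : 8 ≤ L) (σ : Conf L q) :
    ∑ p : Fin 3 × ZMod L, stripEnergy L q σ p.1 p.2 ≤ 2 * Ham L q σ := by
  calc ∑ p : Fin 3 × ZMod L, stripEnergy L q σ p.1 p.2
      = ∑ p : Fin 3 × ZMod L, ∑ e ∈ Efin L q σ,
          (if e.1 ∈ stripSet L p.1 p.2 ∧ e.2 ∈ stripSet L p.1 p.2 then 1 else 0) := by
        refine Finset.sum_congr rfl fun p _ => ?_
        rw [stripEnergy_eq, ESfin_eq_filter, Finset.card_filter]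
    _ = ∑ e ∈ Efin L q σ, ∑ p : Fin 3 × ZMod L,
          (if e.1 ∈ stripSet L p.1 p.2 ∧ e.2 ∈ stripSet L p.1 p.2 then 1 else 0) :=
        Finset.sum_comm
    _ ≤ ∑ _e ∈ Efin L q σ, 2 := by
        refine Finset.sum_le_sum fun e he => ?_
        rw [← Finset.card_filter]
        exact edge_strip_count L q hL σ he
    _ = 2 * Ham L q σ := by
        rw [Finset.sum_const, ham_eq, smul_eq_mul, mul_comm]

end DoubleCount
section Bridges

variable (L q : ℕ)

/-- Strips in different directions intersect. -/
lemma strips_intersect {d d' : Fin 3} (hdd : d ≠ d') (ℓ ℓ' : ZMod L) :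
    ∃ v : Site L, v ∈ stripSet L d ℓ ∧ v ∈ stripSet L d' ℓ' := by
  have h01 : ∀ a b : ZMod L, (((b, a), false) : Site L) ∈ stripSet L 0 a ∧
      (((b, a), false) : Site L) ∈ stripSet L 1 b := by
    intro a b
    constructor <;> rw [mem_strip_iff] <;> simp [idx]
  have h02 : ∀ a b : ZMod L, (((b - a, a), false) : Site L) ∈ stripSet L 0 a ∧
      (((b - a, a), false) : Site L) ∈ stripSet L 2 b := by
    intro a b
    constructor <;> rw [mem_strip_iff] <;> simp [idx]
  have h12 : ∀ a b : ZMod L, (((a, b - a), false) : Site L) ∈ stripSet L 1 a ∧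
      (((a, b - a), false) : Site L) ∈ stripSet L 2 b := by
    intro a b
    constructor <;> rw [mem_strip_iff] <;> simp [idx]
  fin_cases d <;> fin_cases d' <;>
    first
      | exact absurd rfl hdd
      | exact ⟨_, h01 ℓ ℓ'⟩
      | exact ⟨_, h02 ℓ ℓ'⟩
      | exact ⟨_, (h01 ℓ' ℓ).symm⟩
      | exact ⟨_, h12 ℓ ℓ'⟩
      | exact ⟨_, (h02 ℓ' ℓ).symm⟩
      | exact ⟨_, (h12 ℓ' ℓ).symm⟩

/-- A cross-free configuration has a direction `d3` such that no strip in the other two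
directions is a bridge. -/
lemma exists_bridgefree_dirs (σ : Conf L q) (hcf : CrossFree L q σ) :
    ∃ d3 : Fin 3, ∀ d : Fin 3, d ≠ d3 → ∀ ℓ : ZMod L, ¬ IsBridge L q σ d ℓ := by
  by_cases hb : ∃ d ℓ, IsBridge L q σ d ℓ
  · obtain ⟨d3, ℓ3, a, ha⟩ := hb
    refine ⟨d3, fun d hd ℓ ⟨a', ha'⟩ => ?_⟩
    obtain ⟨v, hv3, hv⟩ := strips_intersect L (Ne.symm hd) ℓ3 ℓ
    have : a = a' := by rw [← ha v hv3, ha' v hv]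
    subst this
    exact hcf a ⟨d3, d, ℓ3, ℓ, Ne.symm hd, ha, ha'⟩
  · push_neg at hb
    exact ⟨0, fun d _ ℓ => hb d ℓ⟩

/-- A non-bridge strip is not monochromatic. -/
lemma not_bridge_nonconst [NeZero L] (σ : Conf L q) (d : Fin 3) (ℓ : ZMod L)
    (h : ¬ IsBridge L q σ d ℓ) :
    ∃ v ∈ stripSet L d ℓ, ∃ w ∈ stripSet L d ℓ, σ v ≠ σ w := by
  by_contra hc
  push_neg at hc
  apply h
  have hanch : (cyc L d ℓ 0) ∈ stripSet L d ℓ := cyc_mem L d ℓ 0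
  refine ⟨σ (cyc L d ℓ 0), fun v hv => ?_⟩
  exact hc v hv _ hanch

end Bridges
section Boundary

variable (L q : ℕ)

/-- Crossing edge between consecutive strips in direction `d3`. -/
def crossF {L : ℕ} (d3 : Fin 3) (p : ZMod L × ZMod L) : Site L × Site L :=
  match d3 with
  | ⟨0, _⟩ => (((p.1, p.2 + 1), false), ((p.1, p.2), true))
  | ⟨1, _⟩ => (((p.2 + 1, p.1), false), ((p.2, p.1), true))
  | ⟨2, _⟩ => (((p.1, p.2 - p.1), false), ((p.1, p.2 - p.1), true))

/-- If `σ` is constant on every strip in direction `d3`, with strip values `f`, then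
`H(σ) ≥ L * #{boundaries of f}`. -/
lemma boundary_lower [NeZero L] (σ : Conf L q) (d3 : Fin 3) (f : ZMod L → Fin q)
    (hσf : ∀ v, σ v = f (idx d3 v)) :
    L * (Finset.univ.filter fun ℓ : ZMod L => f ℓ ≠ f (ℓ + 1)).card ≤ Ham L q σ := by
  classical
  set B := Finset.univ.filter fun ℓ : ZMod L => f ℓ ≠ f (ℓ + 1) with hB
  have hmem : ∀ p ∈ Finset.univ ×ˢ B, crossF (L := L) d3 p ∈ Efin L q σ := by
    rintro ⟨x, ℓ⟩ hp
    rw [Finset.mem_product, hB, Finset.mem_filter] at hp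
    have hℓ : f ℓ ≠ f (ℓ + 1) := hp.2.2
    rw [Efin, Finset.mem_filter]
    refine ⟨Finset.mem_univ _, ?_⟩
    fin_cases d3
    · refine ⟨rfl, Or.inl ⟨rfl, rfl, Or.inr (Or.inr ?_)⟩, ?_⟩
      · show ((x, ℓ) : ZMod L × ZMod L) = (x, ℓ + 1 - 1)
        rw [Prod.mk.injEq]
        exact ⟨rfl, by ring⟩
      · rw [hσf, hσf]
        show f (ℓ + 1) ≠ f ℓ
        exact hℓ.symm
    · refine ⟨rfl, Or.inl ⟨rfl, rfl, Or.inr (Or.inl ?_)⟩, ?_⟩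
      · show ((ℓ, x) : ZMod L × ZMod L) = (ℓ + 1 - 1, x)
        rw [Prod.mk.injEq]
        exact ⟨by ring, rfl⟩
      · rw [hσf, hσf]
        show f (ℓ + 1) ≠ f ℓ
        exact hℓ.symm
    · refine ⟨rfl, Or.inl ⟨rfl, rfl, Or.inl rfl⟩, ?_⟩
      rw [hσf, hσf]
      show f (x + (ℓ - x) + 0) ≠ f (x + (ℓ - x) + 1)
      rw [show x + (ℓ - x) + 0 = ℓ by ring, show x + (ℓ - x) + 1 = ℓ + 1 by ring]
      exact hℓ
  have hinj : Set.InjOn (crossF (L := L) d3) ((Finset.univ ×ˢ B : Finset (ZMod L × ZMod L)) : Set (ZMod L × ZMod L)) := by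
    rintro ⟨x1, l1⟩ - ⟨x2, l2⟩ - h
    fin_cases d3 <;> simp only [crossF, Prod.mk.injEq] at h
    · exact Prod.ext (by tauto) (by tauto)
    · exact Prod.ext (by tauto) (by tauto)
    · have hx : x1 = x2 := by tauto
      have hl : l1 - x1 = l2 - x2 := by tauto
      subst hx
      exact Prod.ext rfl (sub_left_inj.mp hl)
  have hcard := Finset.card_le_card_of_injOn (crossF (L := L) d3) hmem hinj
  rw [Finset.card_product, Finset.card_univ, ZMod.card, ham_eq] at *
  exact hcard

end Boundary

/-- Proposition 6.5 (hexagonal lattice): a cross-free configuration with `H(σ) ≤ 2L`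
is a regular configuration, `σ ∈ R_n^{a,b}` for some `a ≠ b` and `n ∈ [1, L-1]`;
in particular `H(σ) = 2L`. -/
theorem crossfree_low_energy_regular (L q : ℕ) (hL : 8 ≤ L) (hq : 2 ≤ q)
    (σ : Conf L q) (hcf : CrossFree L q σ) (hH : Ham L q σ ≤ 2 * L) :
    (∃ (a b : Fin q) (n : ℕ), a ≠ b ∧ 1 ≤ n ∧ n ≤ L - 1 ∧ IsRegular L q σ a b n) ∧
      Ham L q σ = 2 * L := by
  haveI : NeZero L := ⟨by omega⟩
  -- choose the direction d3 whose strips will be constant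
  obtain ⟨d3, hfree⟩ := exists_bridgefree_dirs L q σ hcf
  set S : Fin 3 → ℕ := fun d => ∑ ℓ : ZMod L, stripEnergy L q σ d ℓ with hS
  have hSge : ∀ d : Fin 3, d ≠ d3 → 2 * L ≤ S d := by
    intro d hd
    have h2 : ∀ ℓ : ZMod L, 2 ≤ stripEnergy L q σ d ℓ := by
      intro ℓ
      obtain ⟨v, hv, w, hw, hvw⟩ := not_bridge_nonconst L q σ d ℓ (hfree d hd ℓ)
      exact stripEnergy_ge_two L q hL σ d ℓ hv hw hvw
    calc 2 * L = ∑ _ℓ : ZMod L, 2 := by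
          rw [Finset.sum_const, Finset.card_univ, ZMod.card, smul_eq_mul, mul_comm]
      _ ≤ S d := Finset.sum_le_sum fun ℓ _ => h2 ℓ
  have hsum : ∑ d : Fin 3, S d ≤ 2 * Ham L q σ := by
    have heq : ∑ p : Fin 3 × ZMod L, stripEnergy L q σ p.1 p.2
        = ∑ d : Fin 3, ∑ ℓ : ZMod L, stripEnergy L q σ d ℓ := Fintype.sum_prod_type _
    show ∑ d : Fin 3, ∑ ℓ : ZMod L, stripEnergy L q σ d ℓ ≤ 2 * Ham L q σ
    rw [← heq]
    exact sum_stripEnergy_le L q hL σ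
  have hsplit : S d3 + ∑ d ∈ Finset.univ.erase d3, S d = ∑ d : Fin 3, S d :=
    Finset.add_sum_erase _ S (Finset.mem_univ d3)
  have herase : 2 * (2 * L) ≤ ∑ d ∈ Finset.univ.erase d3, S d := by
    calc 2 * (2 * L) = ∑ _d ∈ Finset.univ.erase d3, 2 * L := by
          rw [Finset.sum_const, Finset.card_erase_of_mem (Finset.mem_univ _),
            Finset.card_univ, Fintype.card_fin, smul_eq_mul]
      _ ≤ _ := Finset.sum_le_sum fun d hd => hSge d (Finset.ne_of_mem_erase hd)
  have hS3 : S d3 = 0 := by omega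
  have hHam : Ham L q σ = 2 * L := by omega
  -- strips in direction d3 are monochromatic
  have hmono : ∀ (ℓ : ZMod L), ∀ v ∈ stripSet L d3 ℓ, ∀ w ∈ stripSet L d3 ℓ, σ v = σ w := by
    intro ℓ
    have h0 : stripEnergy L q σ d3 ℓ = 0 := by
      have := Finset.sum_eq_zero_iff.mp hS3 ℓ (Finset.mem_univ _)
      exact this
    exact stripEnergy_zero_const L q hL σ d3 ℓ h0
  set f : ZMod L → Fin q := fun ℓ => σ (cyc L d3 ℓ 0) with hf
  have hσf : ∀ v, σ v = f (idx d3 v) := by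
    intro v
    exact hmono (idx d3 v) v (mem_strip_iff.mpr rfl) _ (cyc_mem L d3 (idx d3 v) 0)
  -- f is nonconstant
  have hfnc : ∃ ℓa ℓb : ZMod L, f ℓa ≠ f ℓb := by
    by_contra hc
    push_neg at hc
    have hconst : ∀ v, σ v = f 0 := fun v => (hσf v).trans (hc _ 0)
    refine hcf (f 0) ⟨0, 1, 0, 0, by decide, ?_, ?_⟩ <;> exact fun v _ => hconst v
  obtain ⟨ℓa, ℓb, hℓab⟩ := hfnc
  set g : ℕ → Fin q := fun j => f ((j : ℕ) : ZMod L) with hg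
  have hper : ∀ k, g (k + L) = g k := by
    intro k
    simp only [hg]
    congr 1
    push_cast
    simp
  have hgne : g ℓa.val ≠ g ℓb.val := by
    simpa [hg, ZMod.natCast_val, ZMod.cast_id] using hℓab
  obtain ⟨k1, k2, hk1, hk2, hk12, hc1, hc2⟩ := two_changes (by omega) hper hgne
  set ℓ1 : ZMod L := (k1 : ZMod L) with hℓ1
  set ℓ2 : ZMod L := (k2 : ZMod L) with hℓ2
  have hℓ12 : ℓ1 ≠ ℓ2 := fun h => hk12 (natCast_zmod_inj L hk1 hk2 h)
  have hch1 : f ℓ1 ≠ f (ℓ1 + 1) := by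
    simpa [hg, Nat.cast_add] using hc1
  have hch2 : f ℓ2 ≠ f (ℓ2 + 1) := by
    simpa [hg, Nat.cast_add] using hc2
  set B := Finset.univ.filter (fun ℓ : ZMod L => f ℓ ≠ f (ℓ + 1)) with hBdef
  have hBlower := boundary_lower L q σ d3 f hσf
  have hBsub : ({ℓ1, ℓ2} : Finset (ZMod L)) ⊆ B := by
    intro x hx
    rcases Finset.mem_insert.mp hx with rfl | hx
    · exact Finset.mem_filter.mpr ⟨Finset.mem_univ _, hch1⟩
    · rw [Finset.mem_singleton] at hx
      subst hx
      exact Finset.mem_filter.mpr ⟨Finset.mem_univ _, hch2⟩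
  have hpair : ({ℓ1, ℓ2} : Finset (ZMod L)).card = 2 := by
    rw [Finset.card_insert_of_notMem (by simpa using hℓ12), Finset.card_singleton]
  have hB2 : B.card = 2 := by
    have hge : 2 ≤ B.card := hpair ▸ Finset.card_le_card hBsub
    have hle : L * B.card ≤ L * 2 := by
      calc L * B.card ≤ Ham L q σ := hBlower
        _ = 2 * L := hHam
        _ = L * 2 := by ring
    have := Nat.le_of_mul_le_mul_left hle (by omega : 0 < L)
    omega
  have hBeq : B = ({ℓ1, ℓ2} : Finset (ZMod L)) :=
    (Finset.eq_of_subset_of_card_le hBsub (by omega)).symm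
  have hstep : ∀ ℓ : ZMod L, ℓ ≠ ℓ1 → ℓ ≠ ℓ2 → f (ℓ + 1) = f ℓ := by
    intro ℓ h1 h2
    have : ℓ ∉ B := by
      rw [hBeq]
      simp [h1, h2]
    rw [hBdef, Finset.mem_filter] at this
    push_neg at this
    exact (this (Finset.mem_univ _)).symm
  -- the two arcs
  set m : ℕ := (ℓ2 - ℓ1).val with hm
  have hm0 : m ≠ 0 := by
    intro h
    rw [hm, ZMod.val_eq_zero, sub_eq_zero] at h
    exact hℓ12 h.symm
  have hmL : m < L := ZMod.val_lt _
  have hcastm : ((m : ℕ) : ZMod L) = ℓ2 - ℓ1 := by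
    simp [hm, ZMod.natCast_val, ZMod.cast_id]
  set s : ZMod L := ℓ1 + 1 with hs
  have hdvd0 : ∀ j : ℕ, j ≠ 0 → j < L → ((j : ℕ) : ZMod L) ≠ 0 := by
    intro j hj0 hjL h
    rw [ZMod.natCast_eq_zero_iff] at h
    have := Nat.le_of_dvd (by omega) h
    omega
  set b : Fin q := f s with hb
  have claimA : ∀ j : ℕ, j < m → f (s + (j : ZMod L)) = b := by
    intro j
    induction j with
    | zero => intro _; simp [hb]
    | succ j ih =>
      intro hj
      have hne1 : s + (j : ZMod L) ≠ ℓ1 := by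
        intro h
        have : ((j + 1 : ℕ) : ZMod L) = 0 := by
          push_cast
          rw [hs] at h
          linear_combination h
        exact hdvd0 (j + 1) (by omega) (by omega) this
      have hne2 : s + (j : ZMod L) ≠ ℓ2 := by
        intro h
        have : ((m - (j + 1) : ℕ) : ZMod L) = 0 := by
          rw [Nat.cast_sub (by omega)]
          push_cast
          rw [hs] at h
          rw [hcastm]
          linear_combination -h
        exact hdvd0 (m - (j + 1)) (by omega) (by omega) this
      have : f (s + ((j + 1 : ℕ) : ZMod L)) = f (s + (j : ZMod L)) := by
        have harg : s + ((j + 1 : ℕ) : ZMod L) = (s + (j : ZMod L)) + 1 := by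
          push_cast
          ring
        rw [harg]
        exact hstep _ hne1 hne2
      rw [this]
      exact ih (by omega)
  have hfℓ2 : f ℓ2 = b := by
    have : ℓ2 = s + ((m - 1 : ℕ) : ZMod L) := by
      rw [Nat.cast_sub (by omega), hcastm, hs]
      push_cast
      ring
    rw [this]
    exact claimA (m - 1) (by omega)
  set a : Fin q := f (ℓ2 + 1) with ha
  have hab : a ≠ b := by
    rw [ha, ← hfℓ2]
    exact fun h => hch2 h.symm
  have claimB : ∀ j : ℕ, j < L - m → f (ℓ2 + 1 + (j : ZMod L)) = a := by
    intro j
    induction j with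
    | zero => intro _; simp [ha]
    | succ j ih =>
      intro hj
      have hne2 : ℓ2 + 1 + (j : ZMod L) ≠ ℓ2 := by
        intro h
        have : ((j + 1 : ℕ) : ZMod L) = 0 := by
          push_cast
          linear_combination h
        exact hdvd0 (j + 1) (by omega) (by omega) this
      have hne1 : ℓ2 + 1 + (j : ZMod L) ≠ ℓ1 := by
        intro h
        have : ((m + 1 + j : ℕ) : ZMod L) = 0 := by
          push_cast
          rw [hcastm]
          linear_combination h
        exact hdvd0 (m + 1 + j) (by omega) (by omega) this
      have harg : ℓ2 + 1 + ((j + 1 : ℕ) : ZMod L) = (ℓ2 + 1 + (j : ZMod L)) + 1 := by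
        push_cast
        ring
      rw [harg, hstep _ hne1 hne2]
      exact ih (by omega)
  -- the index set P
  set P : Set (ZMod L) := (fun j : ℕ => s + (j : ZMod L)) '' Set.Iio m with hP
  have hinjP : Set.InjOn (fun j : ℕ => s + (j : ZMod L)) (Set.Iio m) := by
    intro j1 hj1 j2 hj2 h
    simp only [Set.mem_Iio] at hj1 hj2
    have : ((j1 : ℕ) : ZMod L) = ((j2 : ℕ) : ZMod L) := by
      have := sub_eq_zero.mpr h
      simp only [add_sub_add_left_eq_sub] at this
      rwa [sub_eq_zero] at this
    exact natCast_zmod_inj L (by omega) (by omega) this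
  have hPcard : P.ncard = m := by
    rw [hP, Set.ncard_image_of_injOn hinjP, ← Finset.coe_Iio, Set.ncard_coe_finset,
      Nat.card_Iio]
  have hCirc : CircConn L P := by
    rintro x ⟨j1, hj1, rfl⟩ y ⟨j2, hj2, rfl⟩
    simp only [Set.mem_Iio] at hj1 hj2
    rcases le_or_gt j1 j2 with hle | hlt
    · refine ⟨j2 - j1, fun n => s + ((j1 + n : ℕ) : ZMod L), by simp, by
        have h9 : j1 + (j2 - j1) = j2 := by omega
        simp only [h9], fun n hn => ⟨j1 + n, by simp only [Set.mem_Iio]; omega, rfl⟩,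
        fun n hn => ?_⟩
      left
      show s + ((j1 + (n + 1) : ℕ) : ZMod L) = s + ((j1 + n : ℕ) : ZMod L) + 1
      push_cast
      ring
    · refine ⟨j1 - j2, fun n => s + ((j1 - n : ℕ) : ZMod L), by simp, by
        have h9 : j1 - (j1 - j2) = j2 := by omega
        simp only [h9], fun n hn => ⟨j1 - n, by simp only [Set.mem_Iio]; omega, rfl⟩,
        fun n hn => ?_⟩
      right
      show s + ((j1 - (n + 1) : ℕ) : ZMod L) = s + ((j1 - n : ℕ) : ZMod L) - 1
      rw [show j1 - (n + 1) = (j1 - n) - 1 by omega, Nat.cast_sub (by omega)]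
      push_cast
      ring
  have honP : ∀ ℓ ∈ P, f ℓ = b := by
    rintro ℓ ⟨j, hj, rfl⟩
    exact claimA j hj
  have hoffP : ∀ ℓ : ZMod L, ℓ ∉ P → f ℓ = a := by
    intro ℓ hℓ
    set jv : ℕ := (ℓ - s).val with hjv
    have hℓeq : ℓ = s + ((jv : ℕ) : ZMod L) := by
      simp [hjv, ZMod.natCast_val, ZMod.cast_id]
    have hjvL : jv < L := ZMod.val_lt _
    have hjvm : ¬ jv < m := fun h => hℓ ⟨jv, h, hℓeq.symm⟩
    have hℓeq2 : ℓ = ℓ2 + 1 + ((jv - m : ℕ) : ZMod L) := by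
      rw [hℓeq, Nat.cast_sub (by omega), hcastm, hs]
      push_cast
      ring
    rw [hℓeq2]
    exact claimB (jv - m) (by omega)
  have hmemU : ∀ v : Site L, v ∈ stripUnion L d3 P ↔ idx d3 v ∈ P := by
    intro v
    simp only [stripUnion, Set.mem_iUnion, exists_prop]
    constructor
    · rintro ⟨ℓ, hℓ, hv⟩
      rw [mem_strip_iff.mp hv]
      exact hℓ
    · intro h
      exact ⟨idx d3 v, h, mem_strip_iff.mpr rfl⟩
  have hxi : σ = xiConf L q a b (stripUnion L d3 P) := by
    funext v
    rw [xiConf]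
    by_cases hv : v ∈ stripUnion L d3 P
    · rw [if_pos hv, hσf v, honP _ ((hmemU v).mp hv)]
    · rw [if_neg hv, hσf v, hoffP _ (fun h => hv ((hmemU v).mpr h))]
  refine ⟨⟨a, b, m, hab, by omega, by omega, d3, P, hCirc, hPcard, hxi⟩, hHam⟩

end IsingHex
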